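/- arXiv:2005.10032 — 2 statements merged into one kernel-verified Lean document; each statement's English description precedes it below -/
import Mathlib

section
/- Let n ≥ 1 and let ν be a positive integer. If f = (f₁,…,f_ν) : 𝔹_{ℓ_∞ⁿ} → 𝔹_{ℓ₂^ν} is a pluriharmonic function on the unit polydisc, then for every z ∈ 𝔹_{ℓ_∞ⁿ}, Σ_{j=1}^{ν} Σ_{k=1}^{n} ( |∂f_j(z)/∂z_k|² + |∂f_j(z)/∂z̄_k|² ) ≤ (1 − ‖f(z)‖₂²)/(1 − ‖z‖_∞²)². -/
open scoped BigOperators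

/-- The Euclidean (ℓ²) norm on `ℂ^ν`. -/
noncomputable def eNorm2 {ν : ℕ} (w : Fin ν → ℂ) : ℝ :=
  Real.sqrt (∑ j, ‖w j‖ ^ 2)

/-!
Composing `h` and `g` with the holomorphic disc `λ ↦ (φ_{z_k}(σ_k λ))_k` through `z`, where
`φ_a(w) = (a + w) / (1 + conj a * w)` is the disc automorphism with `φ_a(0) = a` and
`φ_a'(0) = 1 - |a|²`, reduces the estimate to maps `A + conj B` from the unit disc into the
Euclidean ball. There, Bessel's inequality for the Fourier coefficients `A(0) + conj B(0)`,
`r A'(0)` and `r conj B'(0)` of `A + conj B` on the circle of radius `r`, followed by `r → 1`, gives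
`|A(0) + conj B(0)|² + |A'(0)|² + |B'(0)|² ≤ 1`. Averaging this over all sign vectors
`σ ∈ {±1}ⁿ` cancels the cross terms between different directions `k ≠ l`, and
`1 - |z_k|² ≥ 1 - ‖z‖²_∞` finishes the proof.
-/

open Complex Metric MeasureTheory Finset
open scoped Real ComplexConjugate Topology

lemma fourierCoeffOn_two_pi (f : ℝ → ℂ) (n : ℤ) :
    fourierCoeffOn Real.two_pi_pos f n
      = (2 * (π : ℂ))⁻¹ * ∫ θ in 0..2 * π, exp (-(n * θ * I)) * f θ := by
  rw [fourierCoeffOn_eq_integral]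
  simp only [sub_zero, fourier_coe_apply, smul_eq_mul, real_smul, one_div]
  push_cast
  congr 1
  refine intervalIntegral.integral_congr fun θ _ => ?_
  congr 2
  field_simp

lemma fourierCoeffOn_conj (f : ℝ → ℂ) (n : ℤ) :
    fourierCoeffOn Real.two_pi_pos (fun θ => conj (f θ)) n
      = conj (fourierCoeffOn Real.two_pi_pos f (-n)) := by
  simp only [fourierCoeffOn_two_pi, map_mul, ← intervalIntegral.intervalIntegral_conj]
  simp [← exp_conj, map_ofNat]

lemma exp_natCast_mul_ofReal_mul_I (n : ℕ) (θ : ℝ) : exp (n * θ * I) = exp (θ * I) ^ n := by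
  rw [← exp_nat_mul, mul_assoc]

lemma ContinuousOn.comp_circleMap {E : Type*} [TopologicalSpace E] {φ : ℂ → E} {r : ℝ}
    (hr : 0 ≤ r) (hφ : ContinuousOn φ (closedBall 0 r)) :
    Continuous fun θ => φ (circleMap 0 r θ) :=
  hφ.comp_continuous (continuous_circleMap 0 r)
    fun θ => sphere_subset_closedBall (circleMap_mem_sphere 0 hr θ)

section circle
variable {φ : ℂ → ℂ} {r : ℝ}

lemma fourierCoeffOn_circleMap_natCast (hr : 0 < r) (hφ : DifferentiableOn ℂ φ (closedBall 0 r))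
    (n : ℕ) :
    fourierCoeffOn Real.two_pi_pos (fun θ => φ (circleMap 0 r θ)) n
      = r ^ n * iteratedDeriv n φ 0 / n.factorial := by
  have hr0 : (r : ℂ) ≠ 0 := by exact_mod_cast hr.ne'
  have hcauchy := hφ.circleIntegral_one_div_sub_center_pow_smul hr n
  have hintegrand : ∀ θ : ℝ, deriv (circleMap 0 r) θ • ((1 / (circleMap 0 r θ - 0) ^ (n + 1)) •
      φ (circleMap 0 r θ)) = I / r ^ n * (exp (-(n * θ * I)) * φ (circleMap 0 r θ)) := by
    intro θ
    rw [deriv_circleMap, circleMap_zero, exp_neg, exp_natCast_mul_ofReal_mul_I, smul_eq_mul,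
      smul_eq_mul, sub_zero]
    field_simp
    ring
  rw [circleIntegral] at hcauchy
  simp only [hintegrand, intervalIntegral.integral_const_mul] at hcauchy
  rw [smul_eq_mul] at hcauchy
  rw [fourierCoeffOn_two_pi, Int.cast_natCast]
  field_simp at hcauchy ⊢
  linear_combination hcauchy

lemma fourierCoeffOn_circleMap_neg_succ (hr : 0 < r) (hφ : DifferentiableOn ℂ φ (closedBall 0 r))
    (n : ℕ) :
    fourierCoeffOn Real.two_pi_pos (fun θ => φ (circleMap 0 r θ)) (-(n + 1 : ℕ)) = 0 := by
  have hr0 : (r : ℂ) ≠ 0 := by exact_mod_cast hr.ne'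
  have hcauchy : ∮ z in C(0, r), z ^ n * φ z = 0 :=
    ((differentiableOn_pow n).mul hφ).diffContOnCl_ball subset_rfl |>.circleIntegral_eq_zero hr.le
  have hintegrand : ∀ θ : ℝ, deriv (circleMap 0 r) θ • (circleMap 0 r θ ^ n * φ (circleMap 0 r θ))
      = I * r ^ (n + 1) * (exp (-((-(n + 1 : ℕ) : ℤ) * θ * I)) * φ (circleMap 0 r θ)) := by
    intro θ
    rw [deriv_circleMap, circleMap_zero, smul_eq_mul, show (-((-(n + 1 : ℕ) : ℤ) * θ * I) : ℂ) = (n + 1 : ℕ) * θ * I by push_cast; ring,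
      exp_natCast_mul_ofReal_mul_I]
    ring
  rw [circleIntegral] at hcauchy
  simp only [hintegrand, intervalIntegral.integral_const_mul] at hcauchy
  rw [fourierCoeffOn_two_pi, (mul_eq_zero.1 hcauchy).resolve_left (by simp [I_ne_zero, hr0]),
    mul_zero]

end circle

lemma fourierCoeffOn_add_conj {p q : ℝ → ℂ} (hp : Continuous p) (hq : Continuous q) (n : ℤ) :
    fourierCoeffOn Real.two_pi_pos (fun θ => p θ + conj (q θ)) n
      = fourierCoeffOn Real.two_pi_pos p n + conj (fourierCoeffOn Real.two_pi_pos q (-n)) := by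
  rw [← fourierCoeffOn_conj, fourierCoeffOn_two_pi, fourierCoeffOn_two_pi, fourierCoeffOn_two_pi,
    ← mul_add, ← intervalIntegral.integral_add]
  · simp only [mul_add]
  all_goals exact Continuous.intervalIntegrable (by fun_prop) _ _

lemma sum_sq_norm_fourierCoeffOn_le {u : ℝ → ℂ} (hu : Continuous u) (s : Finset ℤ) :
    ∑ n ∈ s, ‖fourierCoeffOn Real.two_pi_pos u n‖ ^ 2
      ≤ (2 * π)⁻¹ * ∫ θ in 0..2 * π, ‖u θ‖ ^ 2 := by
  have hL2 : MemLp u 2 (volume.restrict (Set.Ioc 0 (2 * π))) :=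
    (memLp_two_iff_integrable_sq_norm hu.aestronglyMeasurable).2
      (Continuous.integrableOn_Ioc (by fun_prop))
  simpa using sum_le_hasSum s (fun n _ => sq_nonneg _) (hasSum_sq_fourierCoeffOn _ hL2)

lemma sq_norm_add_conj_add_sq_norm_deriv_le {a b : ℂ → ℂ} {r : ℝ} (hr : 0 < r)
    (ha : DifferentiableOn ℂ a (closedBall 0 r)) (hb : DifferentiableOn ℂ b (closedBall 0 r)) :
    ‖a 0 + conj (b 0)‖ ^ 2 + r ^ 2 * (‖deriv a 0‖ ^ 2 + ‖deriv b 0‖ ^ 2)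
      ≤ (2 * π)⁻¹ * ∫ θ in 0..2 * π, ‖a (circleMap 0 r θ) + conj (b (circleMap 0 r θ))‖ ^ 2 := by
  have hac := ha.continuousOn.comp_circleMap hr.le
  have hbc := hb.continuousOn.comp_circleMap hr.le
  have hcoeff_add := fourierCoeffOn_add_conj hac hbc
  have hcoeff_zero : ∀ {φ : ℂ → ℂ}, DifferentiableOn ℂ φ (closedBall 0 r) →
      fourierCoeffOn Real.two_pi_pos (fun θ => φ (circleMap 0 r θ)) 0 = φ 0 := fun hφ => by
    simpa using fourierCoeffOn_circleMap_natCast hr hφ 0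
  have hcoeff_one : ∀ {φ : ℂ → ℂ}, DifferentiableOn ℂ φ (closedBall 0 r) →
      fourierCoeffOn Real.two_pi_pos (fun θ => φ (circleMap 0 r θ)) 1 = r * deriv φ 0 :=
    fun hφ => by simpa using fourierCoeffOn_circleMap_natCast hr hφ 1
  have hcoeff_neg_one : ∀ {φ : ℂ → ℂ}, DifferentiableOn ℂ φ (closedBall 0 r) →
      fourierCoeffOn Real.two_pi_pos (fun θ => φ (circleMap 0 r θ)) (-1) = 0 :=
    fun hφ => by simpa using fourierCoeffOn_circleMap_neg_succ hr hφ 0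
  have hbessel := sum_sq_norm_fourierCoeffOn_le
    (u := fun θ => a (circleMap 0 r θ) + conj (b (circleMap 0 r θ)))
    (hac.add (continuous_conj.comp hbc)) {0, 1, -1}
  rw [sum_insert (by decide), sum_pair (by decide), hcoeff_add, hcoeff_add, hcoeff_add]
    at hbessel
  rw [neg_zero, neg_neg, hcoeff_zero ha, hcoeff_zero hb, hcoeff_one ha, hcoeff_neg_one ha, hcoeff_one hb,
    hcoeff_neg_one hb] at hbessel
  convert hbessel using 1
  simp only [norm_mul, norm_real, Real.norm_eq_abs, mul_pow, sq_abs, map_mul, conj_ofReal,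
    RCLike.norm_conj, map_zero, add_zero, zero_add]
  ring

lemma sum_sq_norm_add_conj_add_sum_sq_norm_deriv_le {κ : Type*} [Fintype κ] {A B : ℂ → κ → ℂ}
    (hA : DifferentiableOn ℂ A (ball 0 1)) (hB : DifferentiableOn ℂ B (ball 0 1))
    (hbd : ∀ w ∈ ball (0 : ℂ) 1, ∑ j, ‖A w j + conj (B w j)‖ ^ 2 ≤ 1) :
    ∑ j, ‖A 0 j + conj (B 0 j)‖ ^ 2 + ∑ j, (‖deriv A 0 j‖ ^ 2 + ‖deriv B 0 j‖ ^ 2) ≤ 1 := by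
  set C := ∑ j, ‖A 0 j + conj (B 0 j)‖ ^ 2
  set D := ∑ j, (‖deriv A 0 j‖ ^ 2 + ‖deriv B 0 j‖ ^ 2)
  have hderiv : ∀ {F : ℂ → κ → ℂ}, DifferentiableOn ℂ F (ball 0 1) →
      ∀ j, deriv F 0 j = deriv (fun w => F w j) 0 := fun hF j => by
    rw [deriv_pi fun i => (differentiableAt_pi.1
      (hF.differentiableAt (ball_mem_nhds 0 one_pos))) i]
  have hcircle : ∀ r ∈ Set.Ioo (0 : ℝ) 1, C + r ^ 2 * D ≤ 1 := by
    rintro r ⟨hr0, hr1⟩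
    have hsub : closedBall (0 : ℂ) r ⊆ ball 0 1 := closedBall_subset_ball hr1
    have hcomp : ∀ {F : ℂ → κ → ℂ}, DifferentiableOn ℂ F (ball 0 1) →
        ∀ j, DifferentiableOn ℂ (fun w => F w j) (closedBall 0 r) := fun hF j =>
      (differentiableOn_pi.1 hF j).mono hsub
    have hu : ∀ j, Continuous fun θ => ‖A (circleMap 0 r θ) j + conj (B (circleMap 0 r θ) j)‖ ^ 2 :=
      fun j => (((hcomp hA j).continuousOn.comp_circleMap hr0.le).add
        (continuous_conj.comp ((hcomp hB j).continuousOn.comp_circleMap hr0.le))).norm.pow 2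
    calc C + r ^ 2 * D
        = ∑ j, (‖A 0 j + conj (B 0 j)‖ ^ 2 + r ^ 2 * (‖deriv A 0 j‖ ^ 2 + ‖deriv B 0 j‖ ^ 2)) := by
          simp only [C, D, mul_sum, ← sum_add_distrib]
      _ ≤ ∑ j, (2 * π)⁻¹ *
            ∫ θ in 0..2 * π, ‖A (circleMap 0 r θ) j + conj (B (circleMap 0 r θ) j)‖ ^ 2 :=
          sum_le_sum fun j _ => by
            simpa only [hderiv hA, hderiv hB] using
              sq_norm_add_conj_add_sq_norm_deriv_le hr0 (hcomp hA j) (hcomp hB j)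
      _ = (2 * π)⁻¹ *
            ∫ θ in 0..2 * π, ∑ j, ‖A (circleMap 0 r θ) j + conj (B (circleMap 0 r θ) j)‖ ^ 2 := by
          rw [intervalIntegral.integral_finsetSum fun j _ => (hu j).intervalIntegrable _ _,
            mul_sum]
      _ ≤ (2 * π)⁻¹ * ∫ _ in 0..2 * π, (1 : ℝ) := by
          gcongr
          refine intervalIntegral.integral_mono_on Real.two_pi_pos.le
            ((continuous_finsetSum _ fun j _ => hu j).intervalIntegrable _ _)
            intervalIntegrable_const fun θ _ => hbd _ ?_
          exact hsub (sphere_subset_closedBall (circleMap_mem_sphere 0 hr0.le θ))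
      _ = 1 := by
          rw [intervalIntegral.integral_const, sub_zero, smul_eq_mul, mul_one]
          field_simp
  have hlim : Filter.Tendsto (fun r : ℝ => C + r ^ 2 * D) (𝓝[<] 1) (𝓝 (C + D)) := by
    have hcont : Continuous fun r : ℝ => C + r ^ 2 * D := by fun_prop
    simpa using (hcont.tendsto 1).mono_left nhdsWithin_le_nhds
  exact le_of_tendsto hlim (Filter.eventually_of_mem (Ioo_mem_nhdsLT one_pos) hcircle)

noncomputable def mobius (a w : ℂ) : ℂ := (a + w) / (1 + conj a * w)

section mobius
variable {a w : ℂ}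

lemma one_add_conj_mul_ne_zero (ha : ‖a‖ < 1) (hw : ‖w‖ < 1) : 1 + conj a * w ≠ 0 := by
  have hlt : ‖conj a * w‖ < 1 := by
    rw [norm_mul, RCLike.norm_conj]
    nlinarith [norm_nonneg a, norm_nonneg w]
  intro h
  rw [eq_neg_of_add_eq_zero_right h, norm_neg, norm_one] at hlt
  exact hlt.false

lemma normSq_one_add_conj_mul_sub_normSq_add (a w : ℂ) :
    normSq (1 + conj a * w) - normSq (a + w) = (1 - normSq a) * (1 - normSq w) := by
  simp only [normSq_apply, add_re, add_im, mul_re, mul_im, conj_re, conj_im, one_re, one_im]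
  ring

lemma norm_mobius_lt_one (ha : ‖a‖ < 1) (hw : ‖w‖ < 1) : ‖mobius a w‖ < 1 := by
  rw [mobius, norm_div, div_lt_one (norm_pos_iff.2 (one_add_conj_mul_ne_zero ha hw)),
    ← pow_lt_pow_iff_left₀ (norm_nonneg _) (norm_nonneg _) two_ne_zero, Complex.sq_norm,
    Complex.sq_norm, ← sub_pos, normSq_one_add_conj_mul_sub_normSq_add, ← Complex.sq_norm,
    ← Complex.sq_norm]
  have ha2 : ‖a‖ ^ 2 < 1 := by nlinarith [norm_nonneg a]
  have hw2 : ‖w‖ ^ 2 < 1 := by nlinarith [norm_nonneg w]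
  exact mul_pos (sub_pos.2 ha2) (sub_pos.2 hw2)

@[simp] lemma mobius_zero_right (a : ℂ) : mobius a 0 = a := by simp [mobius]

lemma differentiableOn_mobius (ha : ‖a‖ < 1) : DifferentiableOn ℂ (mobius a) (ball 0 1) :=
  (differentiableOn_const a).add differentiableOn_id |>.div
    ((differentiableOn_const 1).add ((differentiableOn_const _).mul differentiableOn_id))
    fun _ hw => one_add_conj_mul_ne_zero ha (mem_ball_zero_iff.1 hw)

lemma hasDerivAt_mobius_zero (a : ℂ) : HasDerivAt (mobius a) ((1 - ‖a‖ ^ 2 : ℝ) : ℂ) 0 := by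
  have := ((hasDerivAt_id' (0 : ℂ)).const_add a).div
    (((hasDerivAt_id' (0 : ℂ)).const_mul (conj a)).const_add 1) (by simp)
  refine this.congr_deriv ?_
  simp [mul_conj, Complex.sq_norm]

end mobius

lemma sum_sq_norm_add_conj_add_sum_sq_norm_fderiv_le {ι κ : Type*} [Fintype ι] [Fintype κ]
    {h g : (ι → ℂ) → κ → ℂ} (hh : DifferentiableOn ℂ h (ball 0 1))
    (hg : DifferentiableOn ℂ g (ball 0 1))
    (hbd : ∀ z ∈ ball (0 : ι → ℂ) 1, ∑ j, ‖h z j + conj (g z j)‖ ^ 2 ≤ 1)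
    {z : ι → ℂ} (hz : z ∈ ball 0 1) {u : ι → ℂ} (hu : ∀ k, ‖u k‖ ≤ 1) :
    ∑ j, ‖h z j + conj (g z j)‖ ^ 2
      + ∑ j, (‖fderiv ℂ h z (fun k => u k * (1 - ‖z k‖ ^ 2 : ℝ)) j‖ ^ 2
        + ‖fderiv ℂ g z (fun k => u k * (1 - ‖z k‖ ^ 2 : ℝ)) j‖ ^ 2) ≤ 1 := by
  have hzk : ∀ k, ‖z k‖ < 1 := fun k => (norm_le_pi_norm z k).trans_lt (mem_ball_zero_iff.1 hz)
  have hmul : ∀ k, Set.MapsTo (u k * ·) (ball (0 : ℂ) 1) (ball 0 1) := fun k w hw => by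
    rw [mem_ball_zero_iff] at hw ⊢
    rw [norm_mul]
    nlinarith [hu k, norm_nonneg (u k), norm_nonneg w]
  set Φ : ℂ → ι → ℂ := fun w k => mobius (z k) (u k * w)
  have hΦmaps : Set.MapsTo Φ (ball 0 1) (ball 0 1) := fun w hw => by
    rw [mem_ball_zero_iff, pi_norm_lt_iff one_pos]
    exact fun k => norm_mobius_lt_one (hzk k) (mem_ball_zero_iff.1 (hmul k hw))
  have hΦdiff : DifferentiableOn ℂ Φ (ball 0 1) := differentiableOn_pi.2 fun k =>
    (differentiableOn_mobius (hzk k)).comp (differentiableOn_id.const_mul _) (hmul k)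
  have hΦ0 : Φ 0 = z := by simp [Φ]
  have hΦ' : HasDerivAt Φ (fun k => u k * (1 - ‖z k‖ ^ 2 : ℝ)) 0 := hasDerivAt_pi.2 fun k => by
    refine ((hasDerivAt_mobius_zero (z k)).comp_of_eq (0 : ℂ)
      ((hasDerivAt_id' 0).const_mul (u k)) (mul_zero _).symm).congr_deriv ?_
    ring
  have hderiv : ∀ {F : (ι → ℂ) → κ → ℂ}, DifferentiableOn ℂ F (ball 0 1) →
      deriv (F ∘ Φ) 0 = fderiv ℂ F z (fun k => u k * (1 - ‖z k‖ ^ 2 : ℝ)) := fun {F} hF => by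
    have hF' : HasFDerivAt F (fderiv ℂ F z) (Φ 0) :=
      hΦ0 ▸ (hF.differentiableAt (isOpen_ball.mem_nhds hz)).hasFDerivAt
    exact (hF'.comp_hasDerivAt 0 hΦ').deriv
  have := sum_sq_norm_add_conj_add_sum_sq_norm_deriv_le (hh.comp hΦdiff hΦmaps)
    (hg.comp hΦdiff hΦmaps) fun w hw => hbd _ (hΦmaps hw)
  simpa only [hderiv hh, hderiv hg, Function.comp_apply, hΦ0] using this

section signs
variable {ι : Type*} [Fintype ι] [DecidableEq ι]

lemma sum_sign_mul_sign (k l : ι) :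
    ∑ σ : ι → ℤˣ, ((σ k : ℤ) : ℝ) * (σ l : ℤ) = if k = l then 2 ^ Fintype.card ι else 0 := by
  split_ifs with hkl
  · subst hkl
    simp [← Int.cast_mul, ← Units.val_mul, Int.units_mul_self, Fintype.card_units_int]
  · -- multiplying by `τ` flips the sign of `σ k` alone, so it negates every term
    set τ : ι → ℤˣ := Pi.mulSingle k (-1)
    have hflip : ∀ σ : ι → ℤˣ,
        (((τ * σ) k : ℤ) : ℝ) * ((τ * σ) l : ℤ) = -(((σ k : ℤ) : ℝ) * (σ l : ℤ)) := fun σ => by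
      simp [τ, Ne.symm hkl]
    have h := Equiv.sum_comp (Equiv.mulLeft τ) fun σ : ι → ℤˣ => ((σ k : ℤ) : ℝ) * (σ l : ℤ)
    simp only [Equiv.coe_mulLeft, hflip, sum_neg_distrib] at h
    linarith

lemma sum_sq_norm_sum_sign_smul {E : Type*} [NormedAddCommGroup E] [InnerProductSpace ℝ E]
    (x : ι → E) :
    ∑ σ : ι → ℤˣ, ‖∑ k, ((σ k : ℤ) : ℝ) • x k‖ ^ 2 = 2 ^ Fintype.card ι * ∑ k, ‖x k‖ ^ 2 := by
  calc ∑ σ : ι → ℤˣ, ‖∑ k, ((σ k : ℤ) : ℝ) • x k‖ ^ 2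
      = ∑ σ : ι → ℤˣ, ∑ k, ∑ l, ((σ k : ℤ) : ℝ) * (σ l : ℤ) * inner ℝ (x k) (x l) := by
        simp_rw [← real_inner_self_eq_norm_sq, sum_inner, inner_sum, real_inner_smul_left,
          real_inner_smul_right, mul_assoc]
    _ = ∑ k, ∑ l, (∑ σ : ι → ℤˣ, ((σ k : ℤ) : ℝ) * (σ l : ℤ)) * inner ℝ (x k) (x l) := by
        simp_rw [sum_mul]
        rw [sum_comm]
        exact sum_congr rfl fun k _ => sum_comm
    _ = 2 ^ Fintype.card ι * ∑ k, ‖x k‖ ^ 2 := by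
        simp [sum_sign_mul_sign, mul_sum]
end signs

lemma ContinuousLinearMap.apply_pi_eq_sum_single {ι R E : Type*} [Fintype ι] [DecidableEq ι]
    [Semiring R] [TopologicalSpace R] [AddCommMonoid E] [Module R E] [TopologicalSpace E]
    (L : (ι → R) →L[R] E) (v : ι → R) :
    L v = ∑ k, v k • L (Pi.single k 1) := by
  have hsingle : ∀ k : ι, (fun j => if k = j then (1 : R) else 0) = Pi.single k 1 := fun k => by
    ext j
    simp [Pi.single_apply, eq_comm]
  simpa [hsingle] using (L : (ι → R) →ₗ[R] E).pi_apply_eq_sum_univ v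

lemma sum_sign_sq_norm_apply {ι κ : Type*} [Fintype ι] [DecidableEq ι]
    (L : (ι → ℂ) →L[ℂ] (κ → ℂ)) (d : ι → ℝ) (j : κ) :
    ∑ σ : ι → ℤˣ, ‖L (fun k => ((σ k : ℤ) : ℂ) * d k) j‖ ^ 2
      = 2 ^ Fintype.card ι * ∑ k, d k ^ 2 * ‖L (Pi.single k 1) j‖ ^ 2 := by
  have hexpand : ∀ σ : ι → ℤˣ, L (fun k => ((σ k : ℤ) : ℂ) * d k) j
      = ∑ k, ((σ k : ℤ) : ℝ) • ((d k : ℂ) * L (Pi.single k 1) j) := fun σ => by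
    rw [L.apply_pi_eq_sum_single, Finset.sum_apply]
    simp [real_smul, mul_assoc]
  simp only [hexpand, sum_sq_norm_sum_sign_smul, norm_mul, norm_real, Real.norm_eq_abs, mul_pow,
    sq_abs]

lemma sum_sum_sq_norm_apply_single_le_of_forall_sign {ι κ : Type*} [Fintype ι] [DecidableEq ι]
    [Fintype κ] (T S : (ι → ℂ) →L[ℂ] (κ → ℂ)) (d : ι → ℝ) {M : ℝ}
    (hsign : ∀ σ : ι → ℤˣ, ∑ j, (‖T (fun k => ((σ k : ℤ) : ℂ) * d k) j‖ ^ 2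
      + ‖S (fun k => ((σ k : ℤ) : ℂ) * d k) j‖ ^ 2) ≤ M) :
    ∑ j, ∑ k, d k ^ 2 * (‖T (Pi.single k 1) j‖ ^ 2 + ‖S (Pi.single k 1) j‖ ^ 2) ≤ M := by
  refine le_of_mul_le_mul_left ?_ (by positivity : (0 : ℝ) < 2 ^ Fintype.card ι)
  calc 2 ^ Fintype.card ι * ∑ j, ∑ k, d k ^ 2 * (‖T (Pi.single k 1) j‖ ^ 2
        + ‖S (Pi.single k 1) j‖ ^ 2)
      = ∑ σ : ι → ℤˣ, ∑ j, (‖T (fun k => ((σ k : ℤ) : ℂ) * d k) j‖ ^ 2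
          + ‖S (fun k => ((σ k : ℤ) : ℂ) * d k) j‖ ^ 2) := by
        simp only [sum_comm (γ := ι → ℤˣ), sum_add_distrib, sum_sign_sq_norm_apply, mul_sum,
          mul_add]
    _ ≤ ∑ _σ : ι → ℤˣ, M := sum_le_sum fun σ _ => hsign σ
    _ = 2 ^ Fintype.card ι * M := by simp [Fintype.card_units_int]

lemma eNorm2_sq {ν : ℕ} (w : Fin ν → ℂ) : eNorm2 w ^ 2 = ∑ j, ‖w j‖ ^ 2 :=
  Real.sq_sqrt (sum_nonneg fun _ _ => sq_nonneg _)

theorem stmt4_general (n ν : ℕ)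
    (f h g : (Fin n → ℂ) → (Fin ν → ℂ))
    -- the sup (ℓ^∞) norm on `Fin n → ℂ` is the Pi norm, so `Metric.ball 0 1` is the polydisc
    (hh : DifferentiableOn ℂ h (Metric.ball 0 1))
    (hg : DifferentiableOn ℂ g (Metric.ball 0 1))
    (hfd : ∀ z ∈ Metric.ball (0 : Fin n → ℂ) 1,
      ∀ j, f z j = h z j + (starRingEnd ℂ) (g z j))
    (hmap : ∀ z ∈ Metric.ball (0 : Fin n → ℂ) 1, eNorm2 (f z) < 1)
    (z : Fin n → ℂ) (hz : z ∈ Metric.ball (0 : Fin n → ℂ) 1) :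
    ∑ j, ∑ k,
        (‖fderiv ℂ h z (Pi.single k 1) j‖ ^ 2 + ‖fderiv ℂ g z (Pi.single k 1) j‖ ^ 2)
      ≤ (1 - eNorm2 (f z) ^ 2) / (1 - ‖z‖ ^ 2) ^ 2 := by
  have hf : ∀ w ∈ ball (0 : Fin n → ℂ) 1, ∑ j, ‖h w j + conj (g w j)‖ ^ 2 = eNorm2 (f w) ^ 2 :=
    fun w hw => by simp only [← hfd w hw, eNorm2_sq]
  have hbd : ∀ w ∈ ball (0 : Fin n → ℂ) 1, ∑ j, ‖h w j + conj (g w j)‖ ^ 2 ≤ 1 := fun w hw => by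
    rw [hf w hw]
    exact (pow_lt_one₀ (Real.sqrt_nonneg _) (hmap w hw) two_ne_zero).le
  have havg := sum_sum_sq_norm_apply_single_le_of_forall_sign (fderiv ℂ h z) (fderiv ℂ g z)
    (fun k => 1 - ‖z k‖ ^ 2) (M := 1 - eNorm2 (f z) ^ 2) fun σ => by
      have := sum_sq_norm_add_conj_add_sum_sq_norm_fderiv_le hh hg hbd hz
        (u := fun k => ((σ k : ℤ) : ℂ)) fun k => by
          rcases Int.units_eq_one_or (σ k) with hσ | hσ <;> simp [hσ]
      linarith [hf z hz]
  have hz1 : ‖z‖ < 1 := mem_ball_zero_iff.1 hz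
  have hd : 0 < 1 - ‖z‖ ^ 2 := by nlinarith [norm_nonneg z]
  rw [le_div_iff₀ (pow_pos hd 2), sum_mul]
  refine le_trans (sum_le_sum fun j _ => ?_) havg
  rw [sum_mul]
  refine sum_le_sum fun k _ => ?_
  rw [mul_comm]
  gcongr
  exact norm_le_pi_norm z k

theorem stmt4 (n ν : ℕ) (hn : 1 ≤ n) (hν : 1 ≤ ν)
    (f h g : (Fin n → ℂ) → (Fin ν → ℂ))
    -- the sup (ℓ^∞) norm on `Fin n → ℂ` is the Pi norm, so `Metric.ball 0 1` is the polydisc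
    (hh : DifferentiableOn ℂ h (Metric.ball 0 1))
    (hg : DifferentiableOn ℂ g (Metric.ball 0 1))
    (hg0 : g 0 = 0)
    (hfd : ∀ z ∈ Metric.ball (0 : Fin n → ℂ) 1,
      ∀ j, f z j = h z j + (starRingEnd ℂ) (g z j))
    (hmap : ∀ z ∈ Metric.ball (0 : Fin n → ℂ) 1, eNorm2 (f z) < 1)
    (z : Fin n → ℂ) (hz : z ∈ Metric.ball (0 : Fin n → ℂ) 1) :
    ∑ j, ∑ k,
        (‖fderiv ℂ h z (Pi.single k 1) j‖ ^ 2 + ‖fderiv ℂ g z (Pi.single k 1) j‖ ^ 2)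
      ≤ (1 - eNorm2 (f z) ^ 2) / (1 - ‖z‖ ^ 2) ^ 2 :=
  stmt4_general n ν f h g hh hg hfd hmap z hz
end

section
/- Let p ∈ [1,2) and n ≥ 1. If f(z) = Σ_α a_α z^α + Σ_{|α|≥1} conj(b_α) conj(z)^α is a pluriharmonic function on 𝔹_{ℓ_pⁿ} with sup_{z ∈ 𝔹_{ℓ_pⁿ}} |f(z)| ≤ 1, then for every z with ‖z‖_p ≤ 1 / (3 e^{1/3} n^{1 − 1/p}), one has Σ_{k=1}^{∞} Σ_{|α|=k} (|a_α| + |b_α|) |z^α| ≤ 1. -/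
/-!
Sample `f = h + conj g` on the grid of `N`-th roots of unity of the torus `|w_j| = r_j` and
average against `u χ_{-α} + v χ_α`, where `χ_m` are the characters of the grid. Since `|f| ≤ 1`
and `χ_α, χ_{-α}` are orthogonal once `N ∤ 2α`, Cauchy–Schwarz bounds the average by `√2`. The
average is an aliased sum of coefficients of `f`, which converges (dominated convergence) to
`(u a_α + v conj b_α) r^α` as `N → ∞`; choosing the phases `u, v` gives
`(|a_α| + |b_α|) r^α ≤ √2`.

For `p ≥ 1` the closed `ℓ¹` ball lies in the closure of the `ℓ_p` ball, and `r = α / |α|` gives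
`|a_α| + |b_α| ≤ √2 |α|^|α| / α^α ≤ √2 e^{|α|-1} |α|! / α!` by `k^k ≤ e^{k-1} k!`. The multinomial
theorem then bounds the Bohr sum by `(√2 / e) q / (1 - q)` with
`q = e ‖z‖₁ ≤ e n^{1-1/p} ‖z‖_p ≤ e^{2/3} / 3`, and this is at most `1`.
-/

open scoped BigOperators ENNReal

open scoped Classical in
/-- The `p`-norm on `ℂ^n` for `p ∈ [1,∞]` (`ℝ≥0∞`-valued exponent):
the sup norm if `p = ∞`, and `(∑ ‖z j‖^p)^(1/p)` otherwise. -/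
noncomputable def pnormE {n : ℕ} (p : ℝ≥0∞) (z : Fin n → ℂ) : ℝ :=
  if p = ∞ then ⨆ j, ‖z j‖ else (∑ j, ‖z j‖ ^ p.toReal) ^ (1 / p.toReal)

open Complex ComplexConjugate Filter Topology Finset

lemma IsPrimitiveRoot.sum_fin_pow_zpow {K : Type*} [Field K] {ζ : K} {N : ℕ}
    (hζ : IsPrimitiveRoot ζ N) (m : ℤ) :
    ∑ c : Fin N, (ζ ^ m) ^ (c : ℕ) = if (N : ℤ) ∣ m then (N : K) else 0 := by
  rw [Fin.sum_univ_eq_sum_range (fun c => (ζ ^ m) ^ c)]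
  split_ifs with hm
  · simp [(hζ.zpow_eq_one_iff_dvd m).2 hm]
  · have hne : ζ ^ m ≠ 1 := fun h => hm ((hζ.zpow_eq_one_iff_dvd m).1 h)
    rw [geom_sum_eq hne, ← zpow_natCast, ← zpow_mul, mul_comm, zpow_mul, zpow_natCast,
      hζ.pow_eq_one, one_zpow, sub_self, zero_div]

section

variable {n N : ℕ}

section Field

variable {K : Type*} [Field K]

def torusChar (ζ : K) (m : Fin n → ℤ) (γ : Fin n → Fin N) : K :=
  ∏ j, ζ ^ ((γ j : ℤ) * m j)

def latticeIndicator (N : ℕ) (m : Fin n → ℤ) : K :=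
  if ∀ j, (N : ℤ) ∣ m j then 1 else 0

lemma torusChar_mul {ζ : K} (hζ : ζ ≠ 0) (m m' : Fin n → ℤ) (γ : Fin n → Fin N) :
    torusChar ζ m γ * torusChar ζ m' γ = torusChar ζ (m + m') γ := by
  simp only [torusChar, ← prod_mul_distrib, ← zpow_add₀ hζ, Pi.add_apply, mul_add]

lemma sum_torusChar {ζ : K} (hζ : IsPrimitiveRoot ζ N) (m : Fin n → ℤ) :
    ∑ γ : Fin n → Fin N, torusChar ζ m γ = N ^ n * latticeIndicator N m := by
  classical
  simp only [torusChar, mul_comm (_ : ℤ), zpow_mul, zpow_natCast]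
  rw [← Fintype.prod_sum (fun j (c : Fin N) => (ζ ^ m j) ^ (c : ℕ))]
  simp only [hζ.sum_fin_pow_zpow, latticeIndicator]
  split_ifs with h
  · simp [h]
  · obtain ⟨j, hj⟩ := not_forall.1 h
    rw [mul_zero]
    exact prod_eq_zero (mem_univ j) (if_neg hj)

lemma latticeIndicator_neg (N : ℕ) (m : Fin n → ℤ) :
    (latticeIndicator N (-m) : K) = latticeIndicator N m := by
  simp [latticeIndicator]

lemma eventually_latticeIndicator_eq (m : Fin n → ℤ) :
    ∀ᶠ N in atTop, (latticeIndicator N m : K) = if m = 0 then 1 else 0 := by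
  by_cases hm : m = 0
  · simp [latticeIndicator, hm]
  · obtain ⟨j, hj⟩ := Function.ne_iff.1 hm
    filter_upwards [eventually_gt_atTop (m j).natAbs] with N hN
    have : ¬ (N : ℤ) ∣ m j := fun h => hj (Int.eq_zero_of_dvd_of_natAbs_lt_natAbs h (by simpa))
    simp only [latticeIndicator, hm, if_false]
    exact if_neg fun h => this (h j)

end Field

lemma norm_torusChar {ζ : ℂ} (hζ : ‖ζ‖ = 1) (m : Fin n → ℤ) (γ : Fin n → Fin N) :
    ‖torusChar ζ m γ‖ = 1 := by
  simp [torusChar, norm_zpow, hζ]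

lemma conj_torusChar {ζ : ℂ} (hζ : ‖ζ‖ = 1) (m : Fin n → ℤ) (γ : Fin n → Fin N) :
    conj (torusChar ζ m γ) = torusChar ζ (-m) γ := by
  simp [torusChar, map_prod, map_zpow₀, ← inv_eq_conj hζ, inv_zpow', mul_neg]

def torusPoint (ζ : ℂ) (r : Fin n → ℝ) (γ : Fin n → Fin N) : Fin n → ℂ :=
  fun j => r j * ζ ^ (γ j : ℕ)

lemma prod_torusPoint_pow (ζ : ℂ) (r : Fin n → ℝ) (γ : Fin n → Fin N) (β : Fin n → ℕ) :
    ∏ j, torusPoint ζ r γ j ^ β j = (∏ j, (r j : ℂ) ^ β j) * torusChar ζ (Nat.cast ∘ β) γ := by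
  simp only [torusPoint, torusChar, mul_pow, prod_mul_distrib, ← pow_mul]
  norm_cast

lemma norm_torusPoint {ζ : ℂ} (hζ : ‖ζ‖ = 1) {r : Fin n → ℝ} (hr : ∀ j, 0 ≤ r j)
    (γ : Fin n → Fin N) (j : Fin n) : ‖torusPoint ζ r γ j‖ = r j := by
  simp [torusPoint, hζ, abs_of_nonneg (hr j)]

noncomputable def discreteCoeff (ζ : ℂ) (F : (Fin n → Fin N) → ℂ) (m : Fin n → ℤ) : ℂ :=
  ((N : ℂ) ^ n)⁻¹ * ∑ γ, F γ * torusChar ζ (-m) γ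

lemma hasSum_discreteCoeff {ζ : ℂ} (hζ : IsPrimitiveRoot ζ N) (hN : N ≠ 0)
    {A B : (Fin n → ℕ) → ℂ} {F : (Fin n → Fin N) → ℂ}
    (hF : ∀ γ, HasSum (fun β => A β * torusChar ζ (Nat.cast ∘ β) γ
      + B β * torusChar ζ (-(Nat.cast ∘ β)) γ) (F γ)) (m : Fin n → ℤ) :
    HasSum (fun β => A β * latticeIndicator N (Nat.cast ∘ β - m)
      + B β * latticeIndicator N (-(Nat.cast ∘ β) - m)) (discreteCoeff ζ F m) := by
  have hζ0 : ζ ≠ 0 := hζ.ne_zero hN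
  have hNn : (N : ℂ) ^ n ≠ 0 := pow_ne_zero _ (Nat.cast_ne_zero.2 hN)
  have key : ∀ β : Fin n → ℕ, ((N : ℂ) ^ n)⁻¹ * ∑ γ, (A β * torusChar ζ (Nat.cast ∘ β) γ
      + B β * torusChar ζ (-(Nat.cast ∘ β)) γ) * torusChar ζ (-m) γ
      = A β * latticeIndicator N (Nat.cast ∘ β - m)
        + B β * latticeIndicator N (-(Nat.cast ∘ β) - m) := fun β => by
    simp only [add_mul, mul_assoc, torusChar_mul hζ0, sum_add_distrib, ← mul_sum, ← sub_eq_add_neg]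
    rw [sum_torusChar hζ, sum_torusChar hζ]
    field_simp
  have h := (hasSum_sum (s := univ) fun γ _ =>
    (hF γ).mul_right (torusChar ζ (-m) γ)).mul_left ((N : ℂ) ^ n)⁻¹
  simp only [key] at h
  exact h

lemma sum_norm_sq_torusChar_combination {ζ : ℂ} (hζ : IsPrimitiveRoot ζ N) (hN : N ≠ 0)
    (u v : ℂ) {m : Fin n → ℤ} (hm : latticeIndicator N (m + m) = (0 : ℂ)) :
    ∑ γ : Fin n → Fin N, ‖u * torusChar ζ (-m) γ + v * torusChar ζ m γ‖ ^ 2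
      = N ^ n * (‖u‖ ^ 2 + ‖v‖ ^ 2) := by
  have hζ1 : ‖ζ‖ = 1 := hζ.norm'_eq_one hN
  have hζ0 : ζ ≠ 0 := hζ.ne_zero hN
  have hcross : ∑ γ : Fin n → Fin N, u * torusChar ζ (-m) γ * conj (v * torusChar ζ m γ) = 0 := by
    simp only [map_mul, conj_torusChar hζ1, mul_mul_mul_comm, torusChar_mul hζ0, ← mul_sum]
    rw [sum_torusChar hζ, ← neg_add, latticeIndicator_neg, hm, mul_zero, mul_zero]
  have hterm : ∀ γ : Fin n → Fin N, ‖u * torusChar ζ (-m) γ + v * torusChar ζ m γ‖ ^ 2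
      = ‖u‖ ^ 2 + ‖v‖ ^ 2 + 2 * (u * torusChar ζ (-m) γ * conj (v * torusChar ζ m γ)).re := by
    intro γ
    rw [Complex.sq_norm, Complex.normSq_add, Complex.normSq_mul, Complex.normSq_mul]
    simp only [Complex.normSq_eq_norm_sq, norm_torusChar hζ1]
    ring
  simp only [hterm, sum_add_distrib, ← Complex.re_sum, ← mul_sum, hcross]
  simp [mul_add]

lemma norm_mul_discreteCoeff_add_mul_le {ζ : ℂ} (hζ : IsPrimitiveRoot ζ N) (hN : N ≠ 0)
    {F : (Fin n → Fin N) → ℂ} (hF : ∀ γ, ‖F γ‖ ≤ 1) {u v : ℂ} (hu : ‖u‖ ≤ 1) (hv : ‖v‖ ≤ 1)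
    {m : Fin n → ℤ} (hm : latticeIndicator N (m + m) = (0 : ℂ)) :
    ‖u * discreteCoeff ζ F m + v * discreteCoeff ζ F (-m)‖ ≤ √2 := by
  set χ : (Fin n → Fin N) → ℂ := fun γ => u * torusChar ζ (-m) γ + v * torusChar ζ m γ
  have hNn : (0 : ℝ) < (N : ℝ) ^ n := by positivity
  have hsum : u * discreteCoeff ζ F m + v * discreteCoeff ζ F (-m)
      = ((N : ℂ) ^ n)⁻¹ * ∑ γ, F γ * χ γ := by
    simp only [discreteCoeff, χ, neg_neg, mul_add, sum_add_distrib, mul_sum]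
    congr 1 <;> refine sum_congr rfl fun γ _ => by ring
  have hCS : (∑ γ, ‖χ γ‖) ^ 2 ≤ ((N : ℝ) ^ n) ^ 2 * 2 := by
    calc (∑ γ, ‖χ γ‖) ^ 2 ≤ (Fintype.card (Fin n → Fin N) : ℝ) * ∑ γ, ‖χ γ‖ ^ 2 :=
          sq_sum_le_card_mul_sum_sq
      _ = ((N : ℝ) ^ n) ^ 2 * (‖u‖ ^ 2 + ‖v‖ ^ 2) := by
          rw [sum_norm_sq_torusChar_combination hζ hN u v hm]
          simp [sq, mul_assoc]
      _ ≤ ((N : ℝ) ^ n) ^ 2 * 2 := by gcongr; nlinarith [norm_nonneg u, norm_nonneg v]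
  have hχ : ∑ γ, ‖χ γ‖ ≤ (N : ℝ) ^ n * √2 := by
    rw [← pow_le_pow_iff_left₀ (sum_nonneg fun γ _ => norm_nonneg _) (by positivity) two_ne_zero,
      mul_pow, Real.sq_sqrt zero_le_two]
    exact hCS
  rw [hsum, norm_mul, norm_inv, norm_pow, Complex.norm_natCast, inv_mul_le_iff₀ hNn]
  calc ‖∑ γ, F γ * χ γ‖ ≤ ∑ γ, ‖χ γ‖ :=
        (norm_sum_le _ _).trans (sum_le_sum fun γ _ => by
          rw [norm_mul]; exact mul_le_of_le_one_left (norm_nonneg _) (hF γ))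
    _ ≤ (N : ℝ) ^ n * √2 := hχ

lemma norm_mul_latticeIndicator_le (x : ℂ) (N : ℕ) (m : Fin n → ℤ) :
    ‖x * latticeIndicator N m‖ ≤ ‖x‖ := by
  unfold latticeIndicator; split_ifs <;> simp

lemma tendsto_tsum_latticeIndicator {A B : (Fin n → ℕ) → ℂ} (hA : Summable (‖A ·‖))
    (hB : Summable (‖B ·‖)) {α : Fin n → ℕ} (hα : α ≠ 0) :
    Tendsto (fun N : ℕ => ∑' β, (A β * latticeIndicator N (Nat.cast ∘ β - Nat.cast ∘ α)
      + B β * latticeIndicator N (-(Nat.cast ∘ β) - Nat.cast ∘ α))) atTop (𝓝 (A α)) := by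
  set c : ℕ → (Fin n → ℕ) → ℂ := fun N β => A β * latticeIndicator N (Nat.cast ∘ β - Nat.cast ∘ α)
    + B β * latticeIndicator N (-(Nat.cast ∘ β) - Nat.cast ∘ α)
  obtain ⟨j₀, hj₀⟩ := Function.ne_iff.1 hα
  have hlim : ∀ β, Tendsto (c · β) atTop (𝓝 (if β = α then A α else 0)) := by
    intro β
    refine tendsto_const_nhds.congr' ?_
    filter_upwards [eventually_latticeIndicator_eq (K := ℂ) (Nat.cast ∘ β - Nat.cast ∘ α),
      eventually_latticeIndicator_eq (K := ℂ) (-(Nat.cast ∘ β) - Nat.cast ∘ α)] with N h₁ h₂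
    have hneg : (-(Nat.cast ∘ β) - Nat.cast ∘ α : Fin n → ℤ) ≠ 0 := fun h => by
      have := funext_iff.1 h j₀
      simp at this hj₀
      omega
    have hsub : (Nat.cast ∘ β - Nat.cast ∘ α : Fin n → ℤ) = 0 ↔ β = α := by
      simp [sub_eq_zero, funext_iff]
    simp only [c, h₁, h₂, if_neg hneg]
    by_cases hβ : β = α <;> simp [hβ, hsub]
  have hbound : ∀ N β, ‖c N β‖ ≤ ‖A β‖ + ‖B β‖ := fun N β =>
    (norm_add_le _ _).trans <|
      add_le_add (norm_mul_latticeIndicator_le _ _ _) (norm_mul_latticeIndicator_le _ _ _)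
  simpa using tendsto_tsum_of_dominated_convergence (hA.add hB) hlim (.of_forall hbound)

lemma exists_norm_le_one_mul_eq_norm (z : ℂ) : ∃ u : ℂ, ‖u‖ ≤ 1 ∧ u * z = ‖z‖ := by
  refine ⟨conj z / ‖z‖, ?_, ?_⟩
  · rw [norm_div, Complex.norm_conj, Complex.norm_real, norm_norm]
    exact div_self_le_one _
  · rw [div_mul_eq_mul_div, Complex.conj_mul', sq, ← Complex.ofReal_mul, ← Complex.ofReal_div,
      mul_self_div_self]

lemma norm_add_norm_le_sqrt_two_of_hasSum_torusChar {A B : (Fin n → ℕ) → ℂ} (hA : Summable (‖A ·‖))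
    (hB : Summable (‖B ·‖)) {ζ : ℕ → ℂ} (hζ : ∀ N ≠ 0, IsPrimitiveRoot (ζ N) N)
    {F : ∀ N : ℕ, (Fin n → Fin N) → ℂ} (hF₁ : ∀ N ≠ 0, ∀ γ, ‖F N γ‖ ≤ 1)
    (hF : ∀ N ≠ 0, ∀ γ, HasSum (fun β => A β * torusChar (ζ N) (Nat.cast ∘ β) γ
      + B β * torusChar (ζ N) (-(Nat.cast ∘ β)) γ) (F N γ))
    {α : Fin n → ℕ} (hα : α ≠ 0) :
    ‖A α‖ + ‖B α‖ ≤ √2 := by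
  have hα' : (Nat.cast ∘ α + Nat.cast ∘ α : Fin n → ℤ) ≠ 0 := fun h => hα <| funext fun j => by
    have := funext_iff.1 h j; simp at this; omega
  have hlimA : Tendsto (fun N => discreteCoeff (ζ N) (F N) (Nat.cast ∘ α)) atTop (𝓝 (A α)) := by
    refine (tendsto_tsum_latticeIndicator hA hB hα).congr' ?_
    filter_upwards [eventually_ne_atTop 0] with N hN
    exact (hasSum_discreteCoeff (hζ N hN) hN (hF N hN) _).tsum_eq
  have hlimB : Tendsto (fun N => discreteCoeff (ζ N) (F N) (-(Nat.cast ∘ α))) atTop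
      (𝓝 (B α)) := by
    refine (tendsto_tsum_latticeIndicator hB hA hα).congr' ?_
    filter_upwards [eventually_ne_atTop 0] with N hN
    rw [← (hasSum_discreteCoeff (hζ N hN) hN (hF N hN) _).tsum_eq]
    -- the aliased series at `-α` is the one at `α` with `A` and `B` swapped
    refine tsum_congr fun β => ?_
    rw [add_comm, ← latticeIndicator_neg N (Nat.cast ∘ β - -(Nat.cast ∘ α)),
      ← latticeIndicator_neg N (-(Nat.cast ∘ β) - -(Nat.cast ∘ α))]
    congr 3 <;> abel
  obtain ⟨u, hu, huA⟩ := exists_norm_le_one_mul_eq_norm (A α)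
  obtain ⟨v, hv, hvB⟩ := exists_norm_le_one_mul_eq_norm (B α)
  have hbound : ∀ᶠ N in atTop,
      ‖u * discreteCoeff (ζ N) (F N) (Nat.cast ∘ α)
        + v * discreteCoeff (ζ N) (F N) (-(Nat.cast ∘ α))‖ ≤ √2 := by
    filter_upwards [eventually_ne_atTop 0, eventually_latticeIndicator_eq (K := ℂ) _]
      with N hN hN'
    rw [if_neg hα'] at hN'
    exact norm_mul_discreteCoeff_add_mul_le (hζ N hN) hN (hF₁ N hN) hu hv hN'
  have := le_of_tendsto (((hlimA.const_mul u).add (hlimB.const_mul v)).norm) hbound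
  rwa [huA, hvB, ← Complex.ofReal_add, Complex.norm_real, Real.norm_of_nonneg (by positivity)]
    at this

lemma hasSum_add_conj_torusPoint {ζ : ℂ} (hζ : ‖ζ‖ = 1) {r : Fin n → ℝ} (γ : Fin n → Fin N)
    {a b : (Fin n → ℕ) → ℂ} {H G : ℂ}
    (hH : HasSum (fun β => a β * ∏ j, torusPoint ζ r γ j ^ β j) H)
    (hG : HasSum (fun β => b β * ∏ j, torusPoint ζ r γ j ^ β j) G) :
    HasSum (fun β => a β * (∏ j, (r j : ℂ) ^ β j) * torusChar ζ (Nat.cast ∘ β) γ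
      + conj (b β) * (∏ j, (r j : ℂ) ^ β j) * torusChar ζ (-(Nat.cast ∘ β)) γ) (H + conj G) := by
  convert hH.add (hG.map (starRingEnd ℂ) Complex.continuous_conj) using 2 with β
  simp only [prod_torusPoint_pow, Function.comp_apply, map_mul, map_prod, map_pow,
    Complex.conj_ofReal, conj_torusChar hζ]
  ring

lemma norm_add_norm_mul_prod_le_sqrt_two {h g : (Fin n → ℂ) → ℂ} {a b : (Fin n → ℕ) → ℂ}
    {r : Fin n → ℝ} (hr : ∀ j, 0 ≤ r j)
    (hh : ∀ w : Fin n → ℂ, (∀ j, ‖w j‖ = r j) → HasSum (fun β => a β * ∏ j, w j ^ β j) (h w))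
    (hg : ∀ w : Fin n → ℂ, (∀ j, ‖w j‖ = r j) → HasSum (fun β => b β * ∏ j, w j ^ β j) (g w))
    (hf : ∀ w : Fin n → ℂ, (∀ j, ‖w j‖ = r j) → ‖h w + conj (g w)‖ ≤ 1)
    {α : Fin n → ℕ} (hα : α ≠ 0) :
    (‖a α‖ + ‖b α‖) * ∏ j, r j ^ α j ≤ √2 := by
  have hr' : ∀ j, ‖(r j : ℂ)‖ = r j := fun j => by simp [abs_of_nonneg (hr j)]
  have hR : ∀ β : Fin n → ℕ, ‖∏ j, (r j : ℂ) ^ β j‖ = ∏ j, r j ^ β j := fun β => by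
    rw [norm_prod]; simp only [norm_pow, hr']
  have hA := summable_norm_iff.2 (hh _ hr').summable
  have hB := summable_norm_iff.2 (hg _ hr').summable
  have hζ : ∀ N : ℕ, N ≠ 0 → IsPrimitiveRoot (exp (2 * Real.pi * I / N)) N :=
    Complex.isPrimitiveRoot_exp
  have hw : ∀ N (hN : N ≠ 0) (γ : Fin n → Fin N) j, ‖torusPoint _ r γ j‖ = r j :=
    fun N hN γ => norm_torusPoint ((hζ N hN).norm'_eq_one hN) hr γ
  have key := norm_add_norm_le_sqrt_two_of_hasSum_torusChar
    (A := fun β => a β * ∏ j, (r j : ℂ) ^ β j) (B := fun β => conj (b β) * ∏ j, (r j : ℂ) ^ β j) hA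
    (by simpa only [norm_mul, Complex.norm_conj] using hB) hζ
    (F := fun N γ => h (torusPoint _ r γ) + conj (g (torusPoint _ r γ)))
    (fun N hN γ => hf _ (hw N hN γ))
    (fun N hN γ => hasSum_add_conj_torusPoint ((hζ N hN).norm'_eq_one hN) γ
      (hh _ (hw N hN γ)) (hg _ (hw N hN γ))) hα
  simpa only [norm_mul, Complex.norm_conj, hR, add_mul] using key

lemma pnormE_lt_one_of_sum_norm_lt_one {p : ℝ≥0∞} (hp : 1 ≤ p) {w : Fin n → ℂ}
    (hw : ∑ j, ‖w j‖ < 1) : pnormE p w < 1 := by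
  have hle : ∀ j, ‖w j‖ ≤ ∑ j, ‖w j‖ := fun j =>
    single_le_sum (fun i _ => norm_nonneg (w i)) (mem_univ j)
  unfold pnormE
  split_ifs with hp_top
  · exact (Real.iSup_le hle (sum_nonneg fun j _ => norm_nonneg _)).trans_lt hw
  · have hP : 1 ≤ p.toReal := by
      simpa using ENNReal.toReal_mono hp_top hp
    refine Real.rpow_lt_one (sum_nonneg fun j _ => by positivity) ?_ (by positivity)
    calc ∑ j, ‖w j‖ ^ p.toReal ≤ ∑ j, ‖w j‖ :=
          sum_le_sum fun j _ => Real.rpow_le_self_of_le_one (norm_nonneg _)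
            ((hle j).trans hw.le) hP
      _ < 1 := hw

lemma norm_add_norm_mul_prod_le_sqrt_two_of_sum_le_one {h g : (Fin n → ℂ) → ℂ}
    {a b : (Fin n → ℕ) → ℂ}
    (hh : ∀ w : Fin n → ℂ, ∑ j, ‖w j‖ < 1 → HasSum (fun β => a β * ∏ j, w j ^ β j) (h w))
    (hg : ∀ w : Fin n → ℂ, ∑ j, ‖w j‖ < 1 → HasSum (fun β => b β * ∏ j, w j ^ β j) (g w))
    (hf : ∀ w : Fin n → ℂ, ∑ j, ‖w j‖ < 1 → ‖h w + conj (g w)‖ ≤ 1)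
    {r : Fin n → ℝ} (hr : ∀ j, 0 ≤ r j) (hr₁ : ∑ j, r j ≤ 1) {α : Fin n → ℕ} (hα : α ≠ 0) :
    (‖a α‖ + ‖b α‖) * ∏ j, r j ^ α j ≤ √2 := by
  have hlim : Tendsto (fun t : ℝ => (‖a α‖ + ‖b α‖) * ∏ j, (t * r j) ^ α j) (𝓝[<] 1)
      (𝓝 ((‖a α‖ + ‖b α‖) * ∏ j, r j ^ α j)) := by
    have hc : Continuous fun t : ℝ => (‖a α‖ + ‖b α‖) * ∏ j, (t * r j) ^ α j := by fun_prop
    simpa using (hc.tendsto 1).mono_left nhdsWithin_le_nhds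
  refine le_of_tendsto hlim (eventually_of_mem (Ioo_mem_nhdsLT zero_lt_one) fun t ht => ?_)
  have htr : ∀ j, 0 ≤ t * r j := fun j => mul_nonneg ht.1.le (hr j)
  have hball : ∀ w : Fin n → ℂ, (∀ j, ‖w j‖ = t * r j) → ∑ j, ‖w j‖ < 1 := fun w hw => by
    simp only [hw, ← mul_sum]
    nlinarith [ht.1, ht.2]
  exact norm_add_norm_mul_prod_le_sqrt_two htr (fun w hw => hh w (hball w hw))
    (fun w hw => hg w (hball w hw)) (fun w hw => hf w (hball w hw)) hα

lemma exp_one_mul_pow_self_le {k : ℕ} (hk : 0 < k) :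
    Real.exp 1 * (k : ℝ) ^ k ≤ Real.exp 1 ^ k * k.factorial := by
  induction k, hk using Nat.le_induction with
  | base => simp
  | succ k hk ih =>
    have hk' : (k : ℝ) ≠ 0 := by positivity
    have hsplit : ((k + 1 : ℕ) : ℝ) ^ (k + 1) = (k + 1) * (k ^ k * (1 + (k : ℝ)⁻¹) ^ k) := by
      rw [← mul_pow, mul_add, mul_one, mul_inv_cancel₀ hk']
      push_cast
      ring
    calc Real.exp 1 * ((k + 1 : ℕ) : ℝ) ^ (k + 1)
        = (k + 1) * (Real.exp 1 * k ^ k) * (1 + (k : ℝ)⁻¹) ^ k := by rw [hsplit]; ring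
      _ ≤ (k + 1) * (Real.exp 1 ^ k * k.factorial) * Real.exp 1 := by
          gcongr
          exact Real.one_add_inv_pow_le_exp
      _ = Real.exp 1 ^ (k + 1) * (k + 1).factorial := by
          push_cast [Nat.factorial_succ]
          ring

lemma exp_one_mul_sum_pow_sum_le {ι : Type*} [Fintype ι] {α : ι → ℕ} (hα : α ≠ 0) :
    Real.exp 1 * ((∑ i, α i : ℕ) : ℝ) ^ (∑ i, α i)
      ≤ Real.exp 1 ^ (∑ i, α i) * Nat.multinomial univ α * ∏ i, (α i : ℝ) ^ α i := by
  have hk : 0 < ∑ i, α i :=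
    Nat.pos_of_ne_zero fun h => hα <| funext fun i => sum_eq_zero_iff.1 h i (mem_univ i)
  calc Real.exp 1 * ((∑ i, α i : ℕ) : ℝ) ^ (∑ i, α i)
      ≤ Real.exp 1 ^ (∑ i, α i) * (∑ i, α i).factorial := exp_one_mul_pow_self_le hk
    _ = Real.exp 1 ^ (∑ i, α i) * Nat.multinomial univ α * ∏ i, ((α i).factorial : ℝ) := by
        rw [← Nat.multinomial_spec]
        push_cast
        ring
    _ ≤ Real.exp 1 ^ (∑ i, α i) * Nat.multinomial univ α * ∏ i, (α i : ℝ) ^ α i := by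
        gcongr with i
        exact_mod_cast Nat.factorial_le_pow (α i)

lemma norm_add_norm_le_multinomial {h g : (Fin n → ℂ) → ℂ} {a b : (Fin n → ℕ) → ℂ}
    (hh : ∀ w : Fin n → ℂ, ∑ j, ‖w j‖ < 1 → HasSum (fun β => a β * ∏ j, w j ^ β j) (h w))
    (hg : ∀ w : Fin n → ℂ, ∑ j, ‖w j‖ < 1 → HasSum (fun β => b β * ∏ j, w j ^ β j) (g w))
    (hf : ∀ w : Fin n → ℂ, ∑ j, ‖w j‖ < 1 → ‖h w + conj (g w)‖ ≤ 1)
    {α : Fin n → ℕ} (hα : α ≠ 0) :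
    ‖a α‖ + ‖b α‖ ≤ √2 / Real.exp 1 * Real.exp 1 ^ (∑ j, α j) * Nat.multinomial univ α := by
  set k : ℕ := ∑ j, α j with hk_def
  set P : ℝ := ∏ j, (α j : ℝ) ^ α j
  have hk : (0 : ℝ) < k := by
    exact_mod_cast Nat.pos_of_ne_zero fun h => hα <| funext fun i =>
      sum_eq_zero_iff.1 h i (mem_univ i)
  have hP : 0 < P := prod_pos fun j _ => by exact_mod_cast Nat.pow_self_pos
  -- `r = α / |α|` maximizes `r ^ α` on the unit ℓ¹-sphere
  have hsimplex := norm_add_norm_mul_prod_le_sqrt_two_of_sum_le_one hh hg hf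
    (r := fun j => α j / k) (fun j => by positivity)
    (by rw [← sum_div, div_le_one hk]; exact_mod_cast le_rfl) hα
  have hcoef : (‖a α‖ + ‖b α‖) * P ≤ √2 * (k : ℝ) ^ k := by
    simp only [div_pow, prod_div_distrib, prod_pow_eq_pow_sum, ← hk_def, ← mul_div_assoc,
      div_le_iff₀ (pow_pos hk k)] at hsimplex
    exact hsimplex
  rw [div_mul_eq_mul_div, div_mul_eq_mul_div, le_div_iff₀ (Real.exp_pos 1)]
  refine le_of_mul_le_mul_right ?_ hP
  calc (‖a α‖ + ‖b α‖) * Real.exp 1 * P = Real.exp 1 * ((‖a α‖ + ‖b α‖) * P) := by ring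
    _ ≤ Real.exp 1 * (√2 * (k : ℝ) ^ k) := by gcongr
    _ = √2 * (Real.exp 1 * (k : ℝ) ^ k) := by ring
    _ ≤ √2 * (Real.exp 1 ^ k * Nat.multinomial univ α * P) :=
        mul_le_mul_of_nonneg_left (exp_one_mul_sum_pow_sum_le hα) (Real.sqrt_nonneg 2)
    _ = √2 * Real.exp 1 ^ k * Nat.multinomial univ α * P := by ring

lemma sum_multinomial_mul_prod_pow_le {ι : Type*} [Fintype ι] [DecidableEq ι] {y : ι → ℝ}
    (hy : ∀ i, 0 ≤ y i) (hy₁ : ∑ i, y i < 1) {s : Finset (ι → ℕ)} (hs : 0 ∉ s) :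
    ∑ α ∈ s, (Nat.multinomial univ α : ℝ) * ∏ i, y i ^ α i
      ≤ (∑ i, y i) / (1 - ∑ i, y i) := by
  set deg : (ι → ℕ) → ℕ := fun α => ∑ i, α i
  have hdeg : ∀ α ∈ s, deg α ∈ Ico 1 (s.sup deg + 1) := fun α hα => by
    refine mem_Ico.2 ⟨Nat.pos_of_ne_zero fun h => hs ?_, Nat.lt_succ_of_le (le_sup hα)⟩
    rwa [show α = 0 from funext fun i => sum_eq_zero_iff.1 h i (mem_univ i)] at hα
  rw [← sum_fiberwise_of_maps_to hdeg]
  calc ∑ m ∈ Ico 1 (s.sup deg + 1), ∑ α ∈ s with deg α = m,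
        (Nat.multinomial univ α : ℝ) * ∏ i, y i ^ α i
      ≤ ∑ m ∈ Ico 1 (s.sup deg + 1), (∑ i, y i) ^ m := by
        refine sum_le_sum fun m _ => ?_
        rw [sum_pow_eq_sum_piAntidiag]
        refine sum_le_sum_of_subset_of_nonneg (fun α hα => ?_) fun α _ _ =>
          mul_nonneg (Nat.cast_nonneg _) (prod_nonneg fun i _ => pow_nonneg (hy i) _)
        exact mem_piAntidiag.2 ⟨(mem_filter.1 hα).2, fun i _ => mem_univ i⟩
    _ ≤ (∑ i, y i) ^ 1 / (1 - ∑ i, y i) :=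
        geom_sum_Ico_le_of_lt_one (sum_nonneg fun i _ => hy i) hy₁
    _ = (∑ i, y i) / (1 - ∑ i, y i) := by rw [pow_one]

lemma sum_mul_norm_prod_pow_le {c : (Fin n → ℕ) → ℝ} {C : ℝ} (hC : 0 ≤ C)
    (hc : ∀ α ≠ 0, c α ≤ C * Real.exp 1 ^ (∑ j, α j) * Nat.multinomial univ α)
    {z : Fin n → ℂ} (hz : Real.exp 1 * ∑ j, ‖z j‖ < 1) {s : Finset (Fin n → ℕ)} (hs : 0 ∉ s) :
    ∑ α ∈ s, c α * ‖∏ j, z j ^ α j‖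
      ≤ C * ((Real.exp 1 * ∑ j, ‖z j‖) / (1 - Real.exp 1 * ∑ j, ‖z j‖)) := by
  set y : Fin n → ℝ := fun j => Real.exp 1 * ‖z j‖
  have hy : ∑ j, y j = Real.exp 1 * ∑ j, ‖z j‖ := (mul_sum _ _ _).symm
  have hterm : ∀ α ∈ s, c α * ‖∏ j, z j ^ α j‖
      ≤ C * (Nat.multinomial univ α * ∏ j, y j ^ α j) := fun α hα => by
    simp only [y, mul_pow, prod_mul_distrib, prod_pow_eq_pow_sum, norm_prod, norm_pow]
    calc c α * ∏ j, ‖z j‖ ^ α j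
        ≤ C * Real.exp 1 ^ (∑ j, α j) * Nat.multinomial univ α * ∏ j, ‖z j‖ ^ α j := by
          gcongr
          exact hc α (ne_of_mem_of_not_mem hα hs)
      _ = C * (Nat.multinomial univ α * (Real.exp 1 ^ (∑ j, α j) * ∏ j, ‖z j‖ ^ α j)) := by
          ring
  calc ∑ α ∈ s, c α * ‖∏ j, z j ^ α j‖
      ≤ C * ∑ α ∈ s, Nat.multinomial univ α * ∏ j, y j ^ α j := by
        rw [mul_sum]; exact sum_le_sum hterm
    _ ≤ C * ((∑ j, y j) / (1 - ∑ j, y j)) := by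
        gcongr
        exact sum_multinomial_mul_prod_pow_le (fun j => by positivity) (hy ▸ hz) hs
    _ = C * ((Real.exp 1 * ∑ j, ‖z j‖) / (1 - Real.exp 1 * ∑ j, ‖z j‖)) := by rw [hy]

lemma sum_norm_le_rpow_mul_pnormE {p : ℝ≥0∞} (hp : 1 ≤ p) (hp_top : p ≠ ∞) (z : Fin n → ℂ) :
    ∑ j, ‖z j‖ ≤ (n : ℝ) ^ (1 - p.toReal⁻¹) * pnormE p z := by
  have hP : 1 ≤ p.toReal := by simpa using ENNReal.toReal_mono hp_top hp
  have hP₀ : 0 < p.toReal := by positivity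
  have hpow := Real.rpow_sum_le_const_mul_sum_rpow univ (fun j => ‖z j‖) hP
  simp only [abs_norm, card_univ, Fintype.card_fin] at hpow
  rw [pnormE, if_neg hp_top]
  calc ∑ j, ‖z j‖ = ((∑ j, ‖z j‖) ^ p.toReal) ^ p.toReal⁻¹ := by
        rw [← Real.rpow_mul (by positivity), mul_inv_cancel₀ hP₀.ne', Real.rpow_one]
    _ ≤ ((n : ℝ) ^ (p.toReal - 1) * ∑ j, ‖z j‖ ^ p.toReal) ^ p.toReal⁻¹ := by gcongr
    _ = (n : ℝ) ^ (1 - p.toReal⁻¹) * (∑ j, ‖z j‖ ^ p.toReal) ^ (1 / p.toReal) := by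
        rw [Real.mul_rpow (by positivity) (by positivity), ← Real.rpow_mul (by positivity),
          one_div, sub_mul, one_mul, mul_inv_cancel₀ hP₀.ne']

lemma sum_norm_le_of_pnormE_le {p : ℝ≥0∞} (hp : 1 ≤ p) (hp_top : p ≠ ∞) {K : ℝ} (hK : 0 < K)
    {z : Fin n → ℂ} (hz : pnormE p z ≤ 1 / (K * (n : ℝ) ^ (1 - p.toReal⁻¹))) :
    ∑ j, ‖z j‖ ≤ 1 / K := by
  refine (sum_norm_le_rpow_mul_pnormE hp hp_top z).trans ?_
  set c : ℝ := (n : ℝ) ^ (1 - p.toReal⁻¹)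
  rcases (show 0 ≤ c by positivity).eq_or_lt with hc | hc
  · rw [← hc, zero_mul]; positivity
  · calc c * pnormE p z ≤ c * (1 / (K * c)) := by gcongr
      _ = 1 / K := by field_simp

lemma exp_one_mul_le_thirteen_div_twenty {x : ℝ} (hx : x ≤ 1 / (3 * Real.exp (1 / 3))) :
    Real.exp 1 * x ≤ 13 / 20 := by
  have he : Real.exp (2 / 3) ^ 3 = Real.exp 1 ^ 2 := by
    rw [← Real.exp_nat_mul, ← Real.exp_nat_mul]; norm_num
  have he23 : Real.exp (2 / 3) < 1.95 := by
    by_contra! h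
    nlinarith [pow_le_pow_left₀ (by norm_num) h 3, Real.exp_one_lt_d9, Real.exp_pos 1]
  calc Real.exp 1 * x ≤ Real.exp 1 * (1 / (3 * Real.exp (1 / 3))) := by gcongr
    _ = Real.exp (2 / 3) / 3 := by
        rw [show Real.exp 1 = Real.exp (2 / 3) * Real.exp (1 / 3) by
          rw [← Real.exp_add]; norm_num]
        field_simp
    _ ≤ 13 / 20 := by linarith

lemma sqrt_two_div_exp_one_mul_div_one_sub_le_one {y : ℝ} (hy₀ : 0 ≤ y) (hy : y ≤ 13 / 20) :
    √2 / Real.exp 1 * (y / (1 - y)) ≤ 1 := by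
  have hs : √2 < 1.4143 := by
    rw [Real.sqrt_lt' (by norm_num)]; norm_num
  rw [div_mul_eq_mul_div, div_le_one (Real.exp_pos 1), mul_div_assoc',
    div_le_iff₀ (by linarith)]
  nlinarith [Real.sqrt_nonneg 2, Real.exp_one_gt_d9]

end

theorem stmt13_general (n : ℕ) (p : ℝ≥0∞) (hp1 : 1 ≤ p) (hp2 : p < 2)
    (f h g : (Fin n → ℂ) → ℂ) (a b : (Fin n → ℕ) → ℂ)
    (hfd : ∀ z : Fin n → ℂ, pnormE p z < 1 → f z = h z + (starRingEnd ℂ) (g z))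
    (hha : ∀ z : Fin n → ℂ, pnormE p z < 1 →
      HasSum (fun α : Fin n → ℕ => a α * ∏ k, z k ^ α k) (h z))
    (hgb : ∀ z : Fin n → ℂ, pnormE p z < 1 →
      HasSum (fun α : Fin n → ℕ => b α * ∏ k, z k ^ α k) (g z))
    (hmap : ∀ z : Fin n → ℂ, pnormE p z < 1 → ‖f z‖ ≤ 1)
    (z : Fin n → ℂ)
    (hz : pnormE p z ≤ 1 / (3 * Real.exp (1 / 3) * (n : ℝ) ^ (1 - (p.toReal)⁻¹))) :
    -- the (nonnegative-term) Bohr sum over all multi-indices with `|α| ≥ 1`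
    -- is at most 1, i.e. every finite partial sum is at most 1
    ∀ s : Finset (Fin n → ℕ), 0 ∉ s →
      ∑ α ∈ s, (‖a α‖ + ‖b α‖) * ‖∏ k, z k ^ α k‖ ≤ 1 := by
  intro s hs
  have hball : ∀ w : Fin n → ℂ, ∑ j, ‖w j‖ < 1 → pnormE p w < 1 :=
    fun w hw => pnormE_lt_one_of_sum_norm_lt_one hp1 hw
  have hcoef : ∀ α ≠ 0, ‖a α‖ + ‖b α‖
      ≤ √2 / Real.exp 1 * Real.exp 1 ^ (∑ j, α j) * Nat.multinomial univ α :=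
    fun α hα => norm_add_norm_le_multinomial (fun w hw => hha w (hball w hw))
      (fun w hw => hgb w (hball w hw)) (fun w hw => hfd w (hball w hw) ▸ hmap w (hball w hw)) hα
  have hz' : Real.exp 1 * ∑ j, ‖z j‖ ≤ 13 / 20 := exp_one_mul_le_thirteen_div_twenty
    (sum_norm_le_of_pnormE_le hp1 hp2.ne_top (by positivity) hz)
  calc ∑ α ∈ s, (‖a α‖ + ‖b α‖) * ‖∏ k, z k ^ α k‖
      ≤ √2 / Real.exp 1 * ((Real.exp 1 * ∑ j, ‖z j‖) / (1 - Real.exp 1 * ∑ j, ‖z j‖)) :=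
        sum_mul_norm_prod_pow_le (by positivity) hcoef (by linarith) hs
    _ ≤ 1 := sqrt_two_div_exp_one_mul_div_one_sub_le_one (by positivity) hz'

theorem stmt13 (n : ℕ) (hn : 1 ≤ n) (p : ℝ≥0∞) (hp1 : 1 ≤ p) (hp2 : p < 2)
    (f h g : (Fin n → ℂ) → ℂ) (a b : (Fin n → ℕ) → ℂ) (hb0 : b 0 = 0)
    (hh : DifferentiableOn ℂ h {z | pnormE p z < 1})
    (hg : DifferentiableOn ℂ g {z | pnormE p z < 1})
    (hg0 : g 0 = 0)
    (hfd : ∀ z : Fin n → ℂ, pnormE p z < 1 → f z = h z + (starRingEnd ℂ) (g z))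
    (hha : ∀ z : Fin n → ℂ, pnormE p z < 1 →
      HasSum (fun α : Fin n → ℕ => a α * ∏ k, z k ^ α k) (h z))
    (hgb : ∀ z : Fin n → ℂ, pnormE p z < 1 →
      HasSum (fun α : Fin n → ℕ => b α * ∏ k, z k ^ α k) (g z))
    (hmap : ∀ z : Fin n → ℂ, pnormE p z < 1 → ‖f z‖ ≤ 1)
    (z : Fin n → ℂ)
    (hz : pnormE p z ≤ 1 / (3 * Real.exp (1 / 3) * (n : ℝ) ^ (1 - (p.toReal)⁻¹))) :
    -- the (nonnegative-term) Bohr sum over all multi-indices with `|α| ≥ 1`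
    -- is at most 1, i.e. every finite partial sum is at most 1
    ∀ s : Finset (Fin n → ℕ), 0 ∉ s →
      ∑ α ∈ s, (‖a α‖ + ‖b α‖) * ‖∏ k, z k ^ α k‖ ≤ 1 :=
  stmt13_general n p hp1 hp2 f h g a b hfd hha hgb hmap z hz
end
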